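/- Let (ε_k)_{k∈ℕ} be positive numbers with ε_k → 0, and set W'_ε(x) := x/(x² + ε²)^{1/2}. Let (μ^k)_{k∈ℕ} be Borel probability measures on ℝ converging narrowly to μ with lim_{k→∞} ∫ x² dμ^k(x) = ∫ x² dμ(x) < ∞. Suppose (g^k)_{k∈ℕ} is a sequence of continuous functions on ℝ with sup_x |g^k(x)|/(1+|x|) ≤ C for some constant C independent of k, which converges locally uniformly to g: ℝ → ℝ. Then lim_{k→∞} ∫∫ W'_{ε_k}(x − y) g^k(x) dμ^k(x) dμ^k(y) = ∫∫ sgn(x − y) g(x) dμ(x) dμ(y). -/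

import Mathlib

open MeasureTheory Real Filter Set Topology

noncomputable section

namespace SgnAux

/-- smoothed sign kernel -/
noncomputable def phi (e t : ℝ) : ℝ := t / Real.sqrt (t ^ 2 + e ^ 2)

/-- clamp kernel -/
noncomputable def Kc (e t : ℝ) : ℝ := max (-1) (min 1 (t / e))

lemma phi_abs_le (e t : ℝ) : |phi e t| ≤ 1 := by
  rw [phi, abs_div, abs_of_nonneg (Real.sqrt_nonneg _)]
  rcases eq_or_lt_of_le (Real.sqrt_nonneg (t ^ 2 + e ^ 2)) with h | h
  · simp [← h]
  · rw [div_le_one h]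
    calc |t| = Real.sqrt (t ^ 2) := by rw [Real.sqrt_sq_eq_abs]
    _ ≤ _ := Real.sqrt_le_sqrt (by nlinarith [sq_nonneg e])

lemma phi_neg (e t : ℝ) : phi e (-t) = - phi e t := by
  simp [phi, neg_div]

lemma phi_zero (e : ℝ) : phi e 0 = 0 := by simp [phi]

lemma phi_continuous {e : ℝ} (he : 0 < e) : Continuous (phi e) := by
  apply Continuous.div continuous_id
  · exact (Real.continuous_sqrt.comp (by continuity))
  · intro t
    exact ne_of_gt (Real.sqrt_pos.2 (by positivity))

lemma sign_abs_le (t : ℝ) : |Real.sign t| ≤ 1 := by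
  rcases Real.sign_apply_eq t with h | h | h <;> simp [h]

lemma sign_measurable : Measurable Real.sign := by
  unfold Real.sign
  exact Measurable.ite (measurableSet_lt measurable_id measurable_const) measurable_const
    (Measurable.ite (measurableSet_lt measurable_const measurable_id) measurable_const
      measurable_const)

lemma phi_sub_sign_abs_le_one (e t : ℝ) : |phi e t - Real.sign t| ≤ 1 := by
  rcases lt_trichotomy t 0 with h | h | h
  · rw [Real.sign_of_neg h]
    have h1 : phi e t ≤ 0 :=
      div_nonpos_of_nonpos_of_nonneg h.le (Real.sqrt_nonneg _)
    have h2 : -1 ≤ phi e t := (abs_le.1 (phi_abs_le e t)).1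
    rw [abs_le]; constructor <;> linarith
  · simp [h, phi_zero]
  · rw [Real.sign_of_pos h]
    have h1 : 0 ≤ phi e t := div_nonneg h.le (Real.sqrt_nonneg _)
    have h2 : phi e t ≤ 1 := (abs_le.1 (phi_abs_le e t)).2
    rw [abs_le]; constructor <;> linarith

lemma phi_sub_sign_abs_le {e t : ℝ} (he : 0 < e) (ht : t ≠ 0) :
    |phi e t - Real.sign t| ≤ e / |t| := by
  have hs : 0 < Real.sqrt (t ^ 2 + e ^ 2) := Real.sqrt_pos.2 (by positivity)
  have h0 : 0 < |t| := abs_pos.2 ht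
  have hle : |t| ≤ Real.sqrt (t ^ 2 + e ^ 2) := by
    rw [← Real.sqrt_sq_eq_abs]; exact Real.sqrt_le_sqrt (by nlinarith)
  have hsum : Real.sqrt (t ^ 2 + e ^ 2) ≤ |t| + e := by
    calc Real.sqrt (t ^ 2 + e ^ 2) ≤ Real.sqrt ((|t| + e) ^ 2) :=
          Real.sqrt_le_sqrt (by nlinarith [abs_nonneg t, sq_abs t])
    _ = |t| + e := Real.sqrt_sq (by positivity)
  have hkey : 1 - |t| / Real.sqrt (t ^ 2 + e ^ 2) ≤ e / |t| := by
    rw [sub_le_iff_le_add, div_add_div _ _ (ne_of_gt h0) (ne_of_gt hs),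
      le_div_iff₀ (by positivity)]
    nlinarith [mul_le_mul_of_nonneg_left hsum (abs_nonneg t),
      mul_le_mul_of_nonneg_right hle he.le, sq_abs t]
  rcases lt_trichotomy t 0 with h | h | h
  · rw [Real.sign_of_neg h, phi]
    have h2 : t / Real.sqrt (t ^ 2 + e ^ 2) - (-1)
        = 1 - |t| / Real.sqrt (t ^ 2 + e ^ 2) := by
      rw [abs_of_neg h]; ring
    rw [h2, abs_of_nonneg (by rw [sub_nonneg, div_le_one hs]; exact hle)]
    exact hkey
  · exact absurd h ht
  · rw [Real.sign_of_pos h, phi]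
    have h2 : t / Real.sqrt (t ^ 2 + e ^ 2) - 1
        = -(1 - |t| / Real.sqrt (t ^ 2 + e ^ 2)) := by
      rw [abs_of_pos h]; ring
    rw [h2, abs_neg, abs_of_nonneg (by rw [sub_nonneg, div_le_one hs]; exact hle)]
    exact hkey

lemma clamp_comm (u : ℝ) : max (-1) (min 1 u) = min 1 (max (-1) u) := by
  rcases le_total u (-1) with h | h
  · rw [min_eq_right (by linarith : u ≤ (1:ℝ)), max_eq_left h]; norm_num
  · rcases le_total u 1 with h2 | h2
    · rw [min_eq_right h2, max_eq_right h, min_eq_right h2]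
    · rw [min_eq_left h2, max_eq_right (by linarith : (-1:ℝ) ≤ u), min_eq_left h2]
      norm_num

lemma Kc_neg (e t : ℝ) : Kc e (-t) = - Kc e t := by
  rw [Kc, Kc, neg_div, clamp_comm]
  rw [show min 1 (max (-1) (-(t/e))) = - max (-1) (min 1 (t/e)) by
    rw [← min_neg_neg, ← max_neg_neg]; norm_num]

lemma Kc_abs_le (e t : ℝ) : |Kc e t| ≤ 1 := by
  rw [Kc, abs_le]
  exact ⟨le_max_left _ _, max_le (by norm_num) (min_le_left _ _)⟩

lemma Kc_continuous {e : ℝ} : Continuous (Kc e) :=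
  continuous_const.max (continuous_const.min (continuous_id.div_const e))

lemma Kc_diff_le {e : ℝ} (he : 0 < e) (s t : ℝ) :
    |Kc e s - Kc e t| ≤ |s - t| / e := by
  have h1 : |Kc e s - Kc e t| ≤ |min 1 (s / e) - min 1 (t / e)| := by
    rw [Kc, Kc, max_comm (-1) _, max_comm (-1) _]
    exact abs_max_sub_max_le_abs _ _ _
  have h2 : |min 1 (s / e) - min 1 (t / e)| ≤ max |((1:ℝ) - 1)| |s / e - t / e| :=
    abs_min_sub_min_le_max _ _ _ _
  have h3 : max |((1:ℝ) - 1)| |s / e - t / e| = |s / e - t / e| := by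
    simp [abs_nonneg]
  rw [h3] at h2
  calc |Kc e s - Kc e t| ≤ |s / e - t / e| := h1.trans h2
  _ = |s - t| / e := by rw [div_sub_div_same, abs_div, abs_of_pos he]

lemma Kc_sub_sign_abs_le_one_pos {e t : ℝ} (he : 0 < e) (h : 0 < t) :
    |Kc e t - Real.sign t| ≤ 1 := by
  rw [Real.sign_of_pos h]
  have h2 : (0:ℝ) ≤ t / e := by positivity
  have h3 : 0 ≤ Kc e t := le_trans (le_min (by norm_num) h2) (le_max_right _ _)
  have h4 : Kc e t ≤ 1 := (abs_le.1 (Kc_abs_le e t)).2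
  rw [abs_le]; constructor <;> linarith

lemma Kc_sub_sign_abs_le_one {e t : ℝ} (he : 0 < e) : |Kc e t - Real.sign t| ≤ 1 := by
  rcases lt_trichotomy t 0 with h | h | h
  · have := Kc_sub_sign_abs_le_one_pos he (neg_pos.2 h)
    rw [Kc_neg, Real.sign_neg, neg_sub_neg, abs_sub_comm] at this
    exact this
  · subst h
    simp [Kc, Real.sign_zero]
  · exact Kc_sub_sign_abs_le_one_pos he h

lemma Kc_sub_sign_abs_le_pos {e t : ℝ} (he : 0 < e) (h : 0 < t) :
    |Kc e t - Real.sign t| ≤ e / |t| := by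
  rw [Real.sign_of_pos h]
  rcases le_total e t with h1 | h1
  · have : (1:ℝ) ≤ t / e := (le_div_iff₀ he).2 (by linarith)
    rw [Kc, min_eq_left this, max_eq_right (by norm_num : (-1:ℝ) ≤ 1)]
    simp [abs_nonneg]
    positivity
  · have h2 : t / e ≤ 1 := (div_le_one he).2 h1
    have h3 : (0:ℝ) ≤ t / e := by positivity
    rw [Kc, min_eq_right h2, max_eq_right (by linarith : (-1:ℝ) ≤ t / e)]
    have h4 : (1:ℝ) ≤ e / |t| := by
      rw [abs_of_pos h, le_div_iff₀ h]; linarith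
    rw [abs_of_nonpos (by linarith : t / e - 1 ≤ 0)]
    linarith

lemma Kc_sub_sign_abs_le {e t : ℝ} (he : 0 < e) (ht : t ≠ 0) :
    |Kc e t - Real.sign t| ≤ e / |t| := by
  rcases lt_trichotomy t 0 with h | h | h
  · have := Kc_sub_sign_abs_le_pos he (neg_pos.2 h)
    rw [Kc_neg, Real.sign_neg, neg_sub_neg, abs_sub_comm, abs_neg] at this
    exact this
  · exact absurd h ht
  · exact Kc_sub_sign_abs_le_pos he h


/-- cutoff function: 1 on [-R,R], 0 outside [-2R,2R] -/
noncomputable def psi (R x : ℝ) : ℝ := max 0 (min 1 (2 - |x| / R))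

lemma psi_nonneg (R x : ℝ) : 0 ≤ psi R x := le_max_left _ _

lemma psi_le_one (R x : ℝ) : psi R x ≤ 1 := max_le (by norm_num) (min_le_left _ _)

lemma psi_continuous (R : ℝ) : Continuous (psi R) :=
  continuous_const.max (continuous_const.min
    (continuous_const.sub (continuous_abs.div_const R)))

lemma psi_eq_one {R x : ℝ} (hR : 0 < R) (hx : |x| ≤ R) : psi R x = 1 := by
  have h1 : (1:ℝ) ≤ 2 - |x| / R := by
    have : |x| / R ≤ 1 := (div_le_one hR).2 hx
    linarith
  rw [psi, min_eq_left h1, max_eq_right (by norm_num)]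

lemma psi_eq_zero {R x : ℝ} (hR : 0 < R) (hx : 2 * R ≤ |x|) : psi R x = 0 := by
  have h1 : 2 - |x| / R ≤ 0 := by
    have : (2:ℝ) ≤ |x| / R := (le_div_iff₀ hR).2 (by linarith)
    linarith
  rw [psi, min_eq_right (by linarith), max_eq_left h1]

/-- tail estimate pointwise -/
lemma tail_pointwise {C R : ℝ} (hC : 0 ≤ C) (hR : 1 ≤ R) {h : ℝ → ℝ}
    (hgrow : ∀ x, |h x| ≤ C * (1 + |x|)) (x : ℝ) :
    |h x| * (1 - psi R x) ≤ 2 * C / R * x ^ 2 := by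
  have hR0 : (0:ℝ) < R := by linarith
  rcases le_total |x| R with hx | hx
  · rw [psi_eq_one hR0 hx]
    simp
    positivity
  · have h1 : 1 - psi R x ≤ 1 := by linarith [psi_nonneg R x]
    have h2 : 0 ≤ 1 - psi R x := by linarith [psi_le_one R x]
    have hx1 : (1:ℝ) ≤ |x| := le_trans hR hx
    have hxx : |x| * R ≤ x ^ 2 := by
      rw [← sq_abs]
      nlinarith
    calc |h x| * (1 - psi R x) ≤ (C * (1 + |x|)) * 1 := by
          apply mul_le_mul (hgrow x) h1 h2 (by positivity)
    _ = C * (1 + |x|) := by ring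
    _ ≤ C * (2 * |x|) := by nlinarith
    _ ≤ C * (2 * (x ^ 2 / R)) := by
          have : |x| ≤ x ^ 2 / R := (le_div_iff₀ hR0).2 hxx
          nlinarith
    _ = 2 * C / R * x ^ 2 := by field_simp

/-- bounded measurable functions are integrable on finite measures -/
lemma integrable_of_bounded {α : Type*} [MeasurableSpace α] {m : Measure α}
    [IsFiniteMeasure m] {f : α → ℝ} (hf : AEStronglyMeasurable f m) {b : ℝ}
    (hb : ∀ x, |f x| ≤ b) : Integrable f m :=
  Integrable.mono' (integrable_const b) hf
    (ae_of_all _ (fun x => by rw [Real.norm_eq_abs]; exact hb x))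

lemma integrable_one_add_abs {m : Measure ℝ} [IsFiniteMeasure m]
    (hm : Integrable (fun x => x ^ 2) m) :
    Integrable (fun x : ℝ => 1 + |x|) m := by
  apply Integrable.mono' ((integrable_const (2:ℝ)).add hm)
    (continuous_const.add continuous_abs).aestronglyMeasurable
  apply ae_of_all
  intro x
  simp only [Pi.add_apply]
  rw [Real.norm_eq_abs, abs_of_nonneg (by positivity)]
  nlinarith [sq_nonneg (|x| - 1), sq_abs x]

lemma integrable_growth {m : Measure ℝ} [IsFiniteMeasure m]
    (hm : Integrable (fun x => x ^ 2) m) {h : ℝ → ℝ} (hh : Continuous h)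
    {C : ℝ} (hgrow : ∀ x, |h x| ≤ C * (1 + |x|)) : Integrable h m := by
  apply Integrable.mono' ((integrable_one_add_abs hm).const_mul C)
    hh.aestronglyMeasurable
  apply ae_of_all
  intro x
  rw [Real.norm_eq_abs]
  exact hgrow x

/-- the product-measure double integral -/
noncomputable def Jp (K h : ℝ → ℝ) (m : Measure ℝ) : ℝ :=
  ∫ p : ℝ × ℝ, K (p.1 - p.2) * h p.1 ∂(m.prod m)

/-- growth function integrable on the product -/
lemma integrable_growth_prod {m : Measure ℝ} [IsProbabilityMeasure m]
    (hm : Integrable (fun x => x ^ 2) m) (C : ℝ) :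
    Integrable (fun p : ℝ × ℝ => C * (1 + |p.1|)) (m.prod m) := by
  have : Integrable (fun z : ℝ × ℝ => (C * (1 + |z.1|)) * (1:ℝ)) (m.prod m) :=
    Integrable.mul_prod ((integrable_one_add_abs hm).const_mul C) (integrable_const (1:ℝ))
  simpa using this

lemma integrable_sq_fst {m : Measure ℝ} [IsProbabilityMeasure m]
    (hm : Integrable (fun x => x ^ 2) m) (c : ℝ) :
    Integrable (fun p : ℝ × ℝ => c * p.1 ^ 2) (m.prod m) := by
  have : Integrable (fun z : ℝ × ℝ => (c * z.1 ^ 2) * (1:ℝ)) (m.prod m) :=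
    Integrable.mul_prod (hm.const_mul c) (integrable_const (1:ℝ))
  simpa using this

lemma integral_sq_fst {m : Measure ℝ} [IsProbabilityMeasure m] (c : ℝ) :
    ∫ p : ℝ × ℝ, c * p.1 ^ 2 ∂(m.prod m) = c * ∫ x, x ^ 2 ∂m := by
  have := integral_prod_mul (μ := m) (ν := m) (fun x => c * x ^ 2) (fun _ => (1:ℝ))
  simpa [integral_const, integral_const_mul] using this

/-- integrability of the main integrand -/
lemma integrable_kernel_mul {m : Measure ℝ} [IsProbabilityMeasure m]
    (hm : Integrable (fun x => x ^ 2) m) {K h : ℝ → ℝ}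
    (hK : Measurable K) (hKb : ∀ t, |K t| ≤ 1)
    (hh : Continuous h) {C : ℝ} (hgrow : ∀ x, |h x| ≤ C * (1 + |x|)) :
    Integrable (fun p : ℝ × ℝ => K (p.1 - p.2) * h p.1) (m.prod m) := by
  apply Integrable.mono' (integrable_growth_prod hm C)
  · exact ((hK.comp (measurable_fst.sub measurable_snd)).mul
      (hh.measurable.comp measurable_fst)).aestronglyMeasurable
  · apply ae_of_all
    intro p
    rw [Real.norm_eq_abs, abs_mul]
    calc |K (p.1 - p.2)| * |h p.1| ≤ 1 * (C * (1 + |p.1|)) := by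
          apply mul_le_mul (hKb _) (hgrow _) (abs_nonneg _) zero_le_one
    _ = C * (1 + |p.1|) := one_mul _

/-- iterated integral equals product integral -/
lemma iter_eq_prod {m : Measure ℝ} [SFinite m] (F : ℝ → ℝ → ℝ)
    (hint : Integrable (fun p : ℝ × ℝ => F p.1 p.2) (m.prod m)) :
    ∫ y, ∫ x, F x y ∂m ∂m = ∫ p : ℝ × ℝ, F p.1 p.2 ∂(m.prod m) := by
  have h2 : Integrable (Function.uncurry (fun y x => F x y)) (m.prod m) := hint.swap
  rw [MeasureTheory.integral_integral h2]
  rw [← MeasureTheory.integral_prod_swap (fun p : ℝ × ℝ => F p.1 p.2)]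
  rfl


lemma Jp_def (K h : ℝ → ℝ) (m : Measure ℝ) :
    Jp K h m = ∫ p : ℝ × ℝ, K (p.1 - p.2) * h p.1 ∂(m.prod m) := rfl
/-- symmetrization identity -/
lemma Jp_symm {m : Measure ℝ} [IsProbabilityMeasure m] {K h : ℝ → ℝ}
    (hK : Measurable K) (hKb : ∀ t, |K t| ≤ 1) (hodd : ∀ t, K (-t) = -K t)
    (hh : Continuous h) {B : ℝ} (hB : ∀ x, |h x| ≤ B) :
    Jp K h m = (1/2) * ∫ p : ℝ × ℝ, K (p.1 - p.2) * (h p.1 - h p.2) ∂(m.prod m) := by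
  have measK1 : AEStronglyMeasurable (fun p : ℝ × ℝ => K (p.1 - p.2) * h p.1) (m.prod m) :=
    ((hK.comp (measurable_fst.sub measurable_snd)).mul
      (hh.measurable.comp measurable_fst)).aestronglyMeasurable
  have measK2 : AEStronglyMeasurable (fun p : ℝ × ℝ => K (p.1 - p.2) * h p.2) (m.prod m) :=
    ((hK.comp (measurable_fst.sub measurable_snd)).mul
      (hh.measurable.comp measurable_snd)).aestronglyMeasurable
  have hbd : ∀ (x y : ℝ), |K (x - y) * h x| ≤ 1 * B := by
    intro x y
    rw [abs_mul]
    exact mul_le_mul (hKb _) (hB _) (abs_nonneg _) zero_le_one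
  have int1 : Integrable (fun p : ℝ × ℝ => K (p.1 - p.2) * h p.1) (m.prod m) :=
    integrable_of_bounded measK1 (fun p => hbd p.1 p.2)
  have int2 : Integrable (fun p : ℝ × ℝ => K (p.1 - p.2) * h p.2) (m.prod m) := by
    apply integrable_of_bounded measK2
    intro p
    rw [abs_mul]
    exact mul_le_mul (hKb _) (hB _) (abs_nonneg _) zero_le_one
  have hswap : ∫ p : ℝ × ℝ, K (p.1 - p.2) * h p.2 ∂(m.prod m)
      = - ∫ p : ℝ × ℝ, K (p.1 - p.2) * h p.1 ∂(m.prod m) := by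
    rw [← MeasureTheory.integral_prod_swap (fun p : ℝ × ℝ => K (p.1 - p.2) * h p.2)]
    have : ∀ p : ℝ × ℝ, K ((Prod.swap p).1 - (Prod.swap p).2) * h (Prod.swap p).2
        = -(K (p.1 - p.2) * h p.1) := by
      intro p
      have : (Prod.swap p).1 - (Prod.swap p).2 = -(p.1 - p.2) := by
        simp
      rw [this, hodd]
      simp [Prod.swap]
    calc ∫ p : ℝ × ℝ, K ((Prod.swap p).1 - (Prod.swap p).2) * h (Prod.swap p).2 ∂(m.prod m)
        = ∫ p : ℝ × ℝ, -(K (p.1 - p.2) * h p.1) ∂(m.prod m) := by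
          congr 1; funext p; exact this p
    _ = - ∫ p : ℝ × ℝ, K (p.1 - p.2) * h p.1 ∂(m.prod m) := integral_neg _
  have hsub : ∫ p : ℝ × ℝ, K (p.1 - p.2) * (h p.1 - h p.2) ∂(m.prod m)
      = (∫ p : ℝ × ℝ, K (p.1 - p.2) * h p.1 ∂(m.prod m))
        - ∫ p : ℝ × ℝ, K (p.1 - p.2) * h p.2 ∂(m.prod m) := by
    rw [← integral_sub int1 int2]
    congr 1; funext p; ring
  rw [Jp_def, hsub, hswap]
  ring

/-- key difference estimate for two odd kernels -/
lemma Jp_diff_le {m : Measure ℝ} [IsProbabilityMeasure m] {K1 K2 h : ℝ → ℝ}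
    (hK1 : Measurable K1) (hK1b : ∀ t, |K1 t| ≤ 1) (hodd1 : ∀ t, K1 (-t) = -K1 t)
    (hK2 : Measurable K2) (hK2b : ∀ t, |K2 t| ≤ 1) (hodd2 : ∀ t, K2 (-t) = -K2 t)
    {a η θ B : ℝ} (ha : 0 ≤ a) (hη : 0 < η) (hθ : 0 ≤ θ) (hB : 0 ≤ B)
    (hdiff : ∀ t, t ≠ 0 → |K1 t - K2 t| ≤ a / |t|)
    (hh : Continuous h) (hhB : ∀ x, |h x| ≤ B)
    (hmod : ∀ x y, |x - y| ≤ η → |h x - h y| ≤ θ) :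
    |Jp K1 h m - Jp K2 h m| ≤ θ + a * B / η := by
  rw [Jp_symm hK1 hK1b hodd1 hh hhB, Jp_symm hK2 hK2b hodd2 hh hhB]
  have measd : AEStronglyMeasurable
      (fun p : ℝ × ℝ => (K1 (p.1 - p.2) - K2 (p.1 - p.2)) * (h p.1 - h p.2)) (m.prod m) := by
    apply Measurable.aestronglyMeasurable
    exact (((hK1.comp (measurable_fst.sub measurable_snd)).sub
      (hK2.comp (measurable_fst.sub measurable_snd))).mul
      ((hh.measurable.comp measurable_fst).sub (hh.measurable.comp measurable_snd)))
  have hptw : ∀ p : ℝ × ℝ, |(K1 (p.1 - p.2) - K2 (p.1 - p.2)) * (h p.1 - h p.2)|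
      ≤ 2 * θ + 2 * a * B / η := by
    intro p
    rw [abs_mul]
    rcases le_or_gt |p.1 - p.2| η with hc | hc
    · calc |K1 (p.1 - p.2) - K2 (p.1 - p.2)| * |h p.1 - h p.2| ≤ 2 * θ := by
            apply mul_le_mul _ (hmod _ _ hc) (abs_nonneg _) (by norm_num)
            calc |K1 (p.1 - p.2) - K2 (p.1 - p.2)|
                ≤ |K1 (p.1 - p.2)| + |K2 (p.1 - p.2)| := abs_sub _ _
            _ ≤ 2 := by linarith [hK1b (p.1 - p.2), hK2b (p.1 - p.2)]
      _ ≤ 2 * θ + 2 * a * B / η := by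
            have : 0 ≤ 2 * a * B / η := by positivity
            linarith
    · have hne : p.1 - p.2 ≠ 0 := by
        intro hz
        rw [hz] at hc
        simp at hc
        linarith
      calc |K1 (p.1 - p.2) - K2 (p.1 - p.2)| * |h p.1 - h p.2|
          ≤ (a / |p.1 - p.2|) * (2 * B) := by
            apply mul_le_mul (hdiff _ hne) _ (abs_nonneg _) (by positivity)
            calc |h p.1 - h p.2| ≤ |h p.1| + |h p.2| := abs_sub _ _
            _ ≤ 2 * B := by linarith [hhB p.1, hhB p.2]
      _ ≤ (a / η) * (2 * B) := by
            apply mul_le_mul_of_nonneg_right _ (by positivity)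
            gcongr
      _ = 2 * a * B / η := by ring
      _ ≤ 2 * θ + 2 * a * B / η := by linarith
  have intd : Integrable
      (fun p : ℝ × ℝ => (K1 (p.1 - p.2) - K2 (p.1 - p.2)) * (h p.1 - h p.2)) (m.prod m) :=
    integrable_of_bounded measd hptw
  have key : |∫ p : ℝ × ℝ, (K1 (p.1 - p.2) - K2 (p.1 - p.2)) * (h p.1 - h p.2) ∂(m.prod m)|
      ≤ 2 * θ + 2 * a * B / η := by
    calc |∫ p : ℝ × ℝ, (K1 (p.1 - p.2) - K2 (p.1 - p.2)) * (h p.1 - h p.2) ∂(m.prod m)|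
        ≤ ∫ p : ℝ × ℝ, 2 * θ + 2 * a * B / η ∂(m.prod m) := by
          rw [← Real.norm_eq_abs]
          apply norm_integral_le_of_norm_le (integrable_const _)
          exact ae_of_all _ (fun p => by rw [Real.norm_eq_abs]; exact hptw p)
    _ = 2 * θ + 2 * a * B / η := by simp
  have hint1 : Integrable (fun p : ℝ × ℝ => K1 (p.1 - p.2) * (h p.1 - h p.2)) (m.prod m) := by
    apply integrable_of_bounded
    · exact ((hK1.comp (measurable_fst.sub measurable_snd)).mul
        ((hh.measurable.comp measurable_fst).sub
          (hh.measurable.comp measurable_snd))).aestronglyMeasurable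
    · intro p
      rw [abs_mul]
      calc |K1 (p.1 - p.2)| * |h p.1 - h p.2| ≤ 1 * (2 * B) := by
            apply mul_le_mul (hK1b _) _ (abs_nonneg _) zero_le_one
            calc |h p.1 - h p.2| ≤ |h p.1| + |h p.2| := abs_sub _ _
            _ ≤ 2 * B := by linarith [hhB p.1, hhB p.2]
      _ = 2 * B := one_mul _
  have hint2 : Integrable (fun p : ℝ × ℝ => K2 (p.1 - p.2) * (h p.1 - h p.2)) (m.prod m) := by
    apply integrable_of_bounded
    · exact ((hK2.comp (measurable_fst.sub measurable_snd)).mul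
        ((hh.measurable.comp measurable_fst).sub
          (hh.measurable.comp measurable_snd))).aestronglyMeasurable
    · intro p
      rw [abs_mul]
      calc |K2 (p.1 - p.2)| * |h p.1 - h p.2| ≤ 1 * (2 * B) := by
            apply mul_le_mul (hK2b _) _ (abs_nonneg _) zero_le_one
            calc |h p.1 - h p.2| ≤ |h p.1| + |h p.2| := abs_sub _ _
            _ ≤ 2 * B := by linarith [hhB p.1, hhB p.2]
      _ = 2 * B := one_mul _
  have : (1/2 : ℝ) * (∫ p : ℝ × ℝ, K1 (p.1 - p.2) * (h p.1 - h p.2) ∂(m.prod m))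
      - (1/2) * (∫ p : ℝ × ℝ, K2 (p.1 - p.2) * (h p.1 - h p.2) ∂(m.prod m))
      = (1/2) * ∫ p : ℝ × ℝ, (K1 (p.1 - p.2) - K2 (p.1 - p.2)) * (h p.1 - h p.2) ∂(m.prod m) := by
    rw [← mul_sub, ← integral_sub hint1 hint2]
    congr 2
    funext p
    ring
  rw [this, abs_mul, abs_of_nonneg (by norm_num : (0:ℝ) ≤ 1/2)]
  exact le_trans (mul_le_mul_of_nonneg_left key (by norm_num)) (le_of_eq (by ring))

/-- truncation error bound -/
lemma Jp_trunc_le {m : Measure ℝ} [IsProbabilityMeasure m]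
    (hm : Integrable (fun x => x ^ 2) m) {K h : ℝ → ℝ}
    (hK : Measurable K) (hKb : ∀ t, |K t| ≤ 1) (hh : Continuous h)
    {C R : ℝ} (hC : 0 ≤ C) (hR : 1 ≤ R) (hgrow : ∀ x, |h x| ≤ C * (1 + |x|)) :
    |Jp K h m - Jp K (fun x => h x * psi R x) m| ≤ 2 * C / R * ∫ x, x ^ 2 ∂m := by
  have hR0 : (0:ℝ) < R := by linarith
  have hh2 : Continuous (fun x => h x * psi R x) := hh.mul (psi_continuous R)
  have hgrow2 : ∀ x, |h x * psi R x| ≤ C * (1 + |x|) := by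
    intro x
    rw [abs_mul, abs_of_nonneg (psi_nonneg R x)]
    calc |h x| * psi R x ≤ |h x| * 1 :=
          mul_le_mul_of_nonneg_left (psi_le_one R x) (abs_nonneg _)
    _ = |h x| := mul_one _
    _ ≤ C * (1 + |x|) := hgrow x
  have int1 := integrable_kernel_mul hm hK hKb hh hgrow
  have int2 := integrable_kernel_mul hm hK hKb hh2 hgrow2
  rw [Jp_def, Jp_def, ← integral_sub int1 int2]
  have heq : ∀ p : ℝ × ℝ, K (p.1 - p.2) * h p.1 - K (p.1 - p.2) * (h p.1 * psi R p.1)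
      = K (p.1 - p.2) * (h p.1 * (1 - psi R p.1)) := by intro p; ring
  calc |∫ p : ℝ × ℝ, (K (p.1 - p.2) * h p.1 - K (p.1 - p.2) * (h p.1 * psi R p.1)) ∂(m.prod m)|
      ≤ ∫ p : ℝ × ℝ, 2 * C / R * p.1 ^ 2 ∂(m.prod m) := by
        rw [← Real.norm_eq_abs]
        apply norm_integral_le_of_norm_le (integrable_sq_fst hm _)
        apply ae_of_all
        intro p
        rw [Real.norm_eq_abs, heq p, abs_mul, abs_mul, abs_of_nonneg
          (by linarith [psi_le_one R p.1] : (0:ℝ) ≤ 1 - psi R p.1)]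
        calc |K (p.1 - p.2)| * (|h p.1| * (1 - psi R p.1))
            ≤ 1 * (|h p.1| * (1 - psi R p.1)) := by
              apply mul_le_mul_of_nonneg_right (hKb _)
              exact mul_nonneg (abs_nonneg _) (by linarith [psi_le_one R p.1])
        _ = |h p.1| * (1 - psi R p.1) := one_mul _
        _ ≤ 2 * C / R * p.1 ^ 2 := tail_pointwise hC hR hgrow p.1
  _ = 2 * C / R * ∫ x, x ^ 2 ∂m := integral_sq_fst _

/-- inner smoothed-sign integral -/
noncomputable def vF (e : ℝ) (G : ℝ → ℝ) (m : Measure ℝ) (y : ℝ) : ℝ :=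
  ∫ x, Kc e (x - y) * G x ∂m

lemma vF_integrand_integrable {e : ℝ} {G : ℝ → ℝ} (hG : Continuous G) {B : ℝ}
    (hB : ∀ x, |G x| ≤ B) (m : Measure ℝ) [IsProbabilityMeasure m] (y : ℝ) :
    Integrable (fun x => Kc e (x - y) * G x) m := by
  apply integrable_of_bounded (((Kc_continuous.comp (continuous_id.sub
    continuous_const)).mul hG).aestronglyMeasurable) (b := B)
  intro x
  show |Kc e (x - y) * G x| ≤ B
  rw [abs_mul]
  calc |Kc e (x - y)| * |G x| ≤ 1 * B :=
        mul_le_mul (Kc_abs_le _ _) (hB x) (abs_nonneg _) zero_le_one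
  _ = B := one_mul _

lemma vF_abs_le {e : ℝ} {G : ℝ → ℝ} (hG : Continuous G) {B : ℝ} (hB0 : 0 ≤ B)
    (hB : ∀ x, |G x| ≤ B) (m : Measure ℝ) [IsProbabilityMeasure m] (y : ℝ) :
    |vF e G m y| ≤ B := by
  rw [vF, ← Real.norm_eq_abs]
  calc ‖∫ x, Kc e (x - y) * G x ∂m‖ ≤ ∫ _x, B ∂m := by
        apply norm_integral_le_of_norm_le (integrable_const B)
        apply ae_of_all
        intro x
        rw [Real.norm_eq_abs, abs_mul]
        calc |Kc e (x - y)| * |G x| ≤ 1 * B :=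
              mul_le_mul (Kc_abs_le _ _) (hB x) (abs_nonneg _) zero_le_one
        _ = B := one_mul _
  _ = B := by simp

lemma vF_lip {e : ℝ} (he : 0 < e) {G : ℝ → ℝ} (hG : Continuous G) {B : ℝ} (hB0 : 0 ≤ B)
    (hB : ∀ x, |G x| ≤ B) (m : Measure ℝ) [IsProbabilityMeasure m] (y y' : ℝ) :
    |vF e G m y - vF e G m y'| ≤ B / e * |y - y'| := by
  rw [vF, vF, ← integral_sub (vF_integrand_integrable hG hB m y)
    (vF_integrand_integrable hG hB m y'), ← Real.norm_eq_abs]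
  calc ‖∫ x, (Kc e (x - y) * G x - Kc e (x - y') * G x) ∂m‖
      ≤ ∫ _x, B / e * |y - y'| ∂m := by
        apply norm_integral_le_of_norm_le (integrable_const _)
        apply ae_of_all
        intro x
        rw [Real.norm_eq_abs]
        have : Kc e (x - y) * G x - Kc e (x - y') * G x
            = (Kc e (x - y) - Kc e (x - y')) * G x := by ring
        rw [this, abs_mul]
        calc |Kc e (x - y) - Kc e (x - y')| * |G x|
            ≤ (|(x - y) - (x - y')| / e) * B := by
              apply mul_le_mul (Kc_diff_le he _ _) (hB x) (abs_nonneg _) (by positivity)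
        _ = B / e * |y - y'| := by
              rw [show (x - y) - (x - y') = -(y - y') by ring, abs_neg]
              ring
  _ = B / e * |y - y'| := by simp

lemma vF_continuous {e : ℝ} (he : 0 < e) {G : ℝ → ℝ} (hG : Continuous G) {B : ℝ}
    (hB0 : 0 ≤ B) (hB : ∀ x, |G x| ≤ B) (m : Measure ℝ) [IsProbabilityMeasure m] :
    Continuous (vF e G m) := by
  rw [Metric.continuous_iff]
  intro y δ hδ
  refine ⟨δ / (B / e + 1), by positivity, fun y' hy' => ?_⟩
  rw [Real.dist_eq]
  calc |vF e G m y' - vF e G m y| ≤ B / e * |y' - y| := vF_lip he hG hB0 hB m y' y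
  _ ≤ (B / e) * (δ / (B / e + 1)) := by
        apply mul_le_mul_of_nonneg_left _ (by positivity)
        rw [← Real.dist_eq]
        exact hy'.le
  _ < δ := by
        have hc : 0 ≤ B / e := div_nonneg hB0 he.le
        rw [mul_comm, div_mul_eq_mul_div, div_lt_iff₀ (by positivity : (0:ℝ) < B / e + 1)]
        nlinarith

/-- uniform convergence on compacts from pointwise convergence plus equi-Lipschitz -/
lemma unif_conv {w : ℕ → ℝ → ℝ} {wl : ℝ → ℝ} {L : ℝ} (hL : 0 ≤ L)
    (hlip : ∀ k y y', |w k y - w k y'| ≤ L * |y - y'|)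
    (hlipl : ∀ y y', |wl y - wl y'| ≤ L * |y - y'|)
    (hpt : ∀ y, Tendsto (fun k => w k y) atTop (𝓝 (wl y)))
    (S θ : ℝ) (hθ : 0 < θ) :
    ∀ᶠ k in atTop, ∀ y ∈ Icc (-S) S, |w k y - wl y| ≤ θ := by
  set r : ℝ := θ / (4 * (L + 1)) with hr
  have hr0 : 0 < r := by positivity
  obtain ⟨t, ht⟩ := (isCompact_Icc (a := -S) (b := S)).elim_finite_subcover
    (fun c : ℝ => Metric.ball c r) (fun c => Metric.isOpen_ball)
    (fun y _ => mem_iUnion.2 ⟨y, Metric.mem_ball_self hr0⟩)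
  have hev : ∀ᶠ k in atTop, ∀ c ∈ (t : Set ℝ), |w k c - wl c| < θ / 2 := by
    rw [eventually_all_finite t.finite_toSet]
    intro c _
    have := (hpt c).eventually (Metric.ball_mem_nhds (wl c) (by positivity : (0:ℝ) < θ / 2))
    filter_upwards [this] with k hk
    rw [Real.dist_eq] at hk
    exact hk
  filter_upwards [hev] with k hk y hy
  obtain ⟨c, hct, hyc⟩ := mem_iUnion₂.1 (ht hy)
  rw [Metric.mem_ball, Real.dist_eq] at hyc
  have h1 : |w k y - w k c| ≤ L * |y - c| := hlip k y c
  have h2 : |wl c - wl y| ≤ L * |c - y| := hlipl c y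
  have h3 : |w k c - wl c| < θ / 2 := hk c hct
  have h4 : L * |y - c| ≤ L * r := mul_le_mul_of_nonneg_left hyc.le hL
  have h5 : L * |c - y| ≤ L * r := by rw [abs_sub_comm]; exact h4
  have h6 : L * r ≤ θ / 4 := by
    rw [hr]
    calc L * (θ / (4 * (L + 1))) ≤ (L + 1) * (θ / (4 * (L + 1))) := by
          apply mul_le_mul_of_nonneg_right (by linarith) (by positivity)
    _ = θ / 4 := by field_simp
  calc |w k y - wl y| = |(w k y - w k c) + (w k c - wl c) + (wl c - wl y)| := by ring_nf
  _ ≤ |w k y - w k c| + |w k c - wl c| + |wl c - wl y| := by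
        apply le_trans (abs_add_le _ _)
        apply add_le_add_left (abs_add_le _ _)
  _ ≤ θ / 4 + θ / 2 + θ / 4 := by
        apply add_le_add (add_le_add (h4.trans' h1 |>.trans h6) h3.le) (h5.trans' h2 |>.trans h6)
  _ = θ := by ring

/-- sup-norm comparison of Jp in the test function -/
lemma Jp_sup_diff {m : Measure ℝ} [IsProbabilityMeasure m] {K h1 h2 : ℝ → ℝ}
    (hK : Measurable K) (hKb : ∀ t, |K t| ≤ 1)
    (hh1 : Continuous h1) (hh2 : Continuous h2) {b1 b2 τ : ℝ}
    (hb1 : ∀ x, |h1 x| ≤ b1) (hb2 : ∀ x, |h2 x| ≤ b2) (hτ : 0 ≤ τ)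
    (hd : ∀ x, |h1 x - h2 x| ≤ τ) : |Jp K h1 m - Jp K h2 m| ≤ τ := by
  have hi1 : Integrable (fun p : ℝ × ℝ => K (p.1 - p.2) * h1 p.1) (m.prod m) := by
    apply integrable_of_bounded (((hK.comp (measurable_fst.sub measurable_snd)).mul
      (hh1.measurable.comp measurable_fst)).aestronglyMeasurable) (b := b1)
    intro p
    show |K (p.1 - p.2) * h1 p.1| ≤ b1
    rw [abs_mul]
    calc |K (p.1 - p.2)| * |h1 p.1| ≤ 1 * b1 := by
          apply mul_le_mul (hKb _) (hb1 _) (abs_nonneg _) zero_le_one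
    _ = b1 := one_mul _
  have hi2 : Integrable (fun p : ℝ × ℝ => K (p.1 - p.2) * h2 p.1) (m.prod m) := by
    apply integrable_of_bounded (((hK.comp (measurable_fst.sub measurable_snd)).mul
      (hh2.measurable.comp measurable_fst)).aestronglyMeasurable) (b := b2)
    intro p
    show |K (p.1 - p.2) * h2 p.1| ≤ b2
    rw [abs_mul]
    calc |K (p.1 - p.2)| * |h2 p.1| ≤ 1 * b2 := by
          apply mul_le_mul (hKb _) (hb2 _) (abs_nonneg _) zero_le_one
    _ = b2 := one_mul _
  rw [Jp_def, Jp_def, ← integral_sub hi1 hi2, ← Real.norm_eq_abs]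
  calc ‖∫ p : ℝ × ℝ, (K (p.1 - p.2) * h1 p.1 - K (p.1 - p.2) * h2 p.1) ∂(m.prod m)‖
      ≤ ∫ _p : ℝ × ℝ, τ ∂(m.prod m) := by
        apply norm_integral_le_of_norm_le (integrable_const _)
        apply ae_of_all
        intro p
        rw [Real.norm_eq_abs, show K (p.1 - p.2) * h1 p.1 - K (p.1 - p.2) * h2 p.1
          = K (p.1 - p.2) * (h1 p.1 - h2 p.1) by ring, abs_mul]
        calc |K (p.1 - p.2)| * |h1 p.1 - h2 p.1| ≤ 1 * τ :=
              mul_le_mul (hKb _) (hd _) (abs_nonneg _) zero_le_one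
        _ = τ := one_mul _
  _ = τ := by simp

/-- convergence of the fixed-kernel interaction term -/
lemma tendsto_Jp_Kc (μk : ℕ → Measure ℝ) (μ : Measure ℝ)
    [∀ k, IsProbabilityMeasure (μk k)] [IsProbabilityMeasure μ]
    (hmom : Integrable (fun x => x ^ 2) μ) (hmomk : ∀ k, Integrable (fun x => x ^ 2) (μk k))
    (hnarrow : ∀ f : ℝ → ℝ, Continuous f → (∃ M, ∀ x, |f x| ≤ M) →
      Tendsto (fun k => ∫ x, f x ∂μk k) atTop (𝓝 (∫ x, f x ∂μ)))
    {M : ℝ} (hM : 1 ≤ M) (hMk : ∀ k, ∫ x, x ^ 2 ∂μk k ≤ M)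
    {e : ℝ} (he : 0 < e) {G : ℝ → ℝ} (hG : Continuous G) {B : ℝ} (hB1 : 1 ≤ B)
    (hB : ∀ x, |G x| ≤ B) :
    Tendsto (fun k => Jp (Kc e) G (μk k)) atTop (𝓝 (Jp (Kc e) G μ)) := by
  have hB0 : (0:ℝ) ≤ B := by linarith
  have hM0 : (0:ℝ) < M := by linarith
  have hBp : (0:ℝ) < B := by linarith
  have hgrow : ∀ x : ℝ, |G x| ≤ B * (1 + |x|) := fun x =>
    le_trans (hB x) (by nlinarith [abs_nonneg x])
  have hJp : ∀ (m : Measure ℝ) [IsProbabilityMeasure m], Integrable (fun x => x ^ 2) m →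
      Jp (Kc e) G m = ∫ y, vF e G m y ∂m := by
    intro m _ hm
    rw [Jp_def, ← iter_eq_prod (fun x y => Kc e (x - y) * G x)
      (integrable_kernel_mul hm Kc_continuous.measurable (Kc_abs_le e) hG hgrow)]
    rfl
  rw [Metric.tendsto_nhds]
  intro δ hδ
  set S := Real.sqrt (16 * B * M / δ) + 1 with hSdef
  have hS0 : (0:ℝ) < S := by positivity
  have hS2 : 16 * B * M / δ ≤ S ^ 2 := by
    rw [hSdef]
    nlinarith [Real.sq_sqrt (show (0:ℝ) ≤ 16 * B * M / δ by positivity),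
      Real.sqrt_nonneg (16 * B * M / δ)]
  have hSb : 2 * B * M / S ^ 2 ≤ δ / 8 := by
    rw [div_le_iff₀ (by positivity)]
    calc 2 * B * M = δ / 8 * (16 * B * M / δ) := by field_simp; ring
    _ ≤ δ / 8 * S ^ 2 := mul_le_mul_of_nonneg_left hS2 (by positivity)
  have hpt : ∀ y, Tendsto (fun k => vF e G (μk k) y) atTop (𝓝 (vF e G μ y)) := by
    intro y
    have hc : Continuous (fun x => Kc e (x - y) * G x) :=
      (Kc_continuous.comp (continuous_id.sub continuous_const)).mul hG
    have hbd : ∀ x, |Kc e (x - y) * G x| ≤ B := by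
      intro x
      rw [abs_mul]
      calc |Kc e (x - y)| * |G x| ≤ 1 * B :=
            mul_le_mul (Kc_abs_le _ _) (hB x) (abs_nonneg _) zero_le_one
      _ = B := one_mul _
    exact hnarrow (fun x => Kc e (x - y) * G x) hc ⟨B, hbd⟩
  have hunif := unif_conv (L := B / e) (by positivity)
    (fun k => vF_lip he hG hB0 hB (μk k)) (vF_lip he hG hB0 hB μ) hpt S (δ / 8)
    (by positivity)
  have hvnar := hnarrow (vF e G μ) (vF_continuous he hG hB0 hB μ)
    ⟨B, vF_abs_le hG hB0 hB μ⟩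
  have hvev := (Metric.tendsto_nhds.mp hvnar) (δ / 2) (by positivity)
  filter_upwards [hunif, hvev] with k hk1 hk2
  rw [hJp (μk k) (hmomk k), hJp μ hmom, Real.dist_eq]
  rw [Real.dist_eq] at hk2
  have hint_vk : Integrable (vF e G (μk k)) (μk k) :=
    integrable_of_bounded (vF_continuous he hG hB0 hB (μk k)).aestronglyMeasurable
      (vF_abs_le hG hB0 hB (μk k))
  have hint_v : Integrable (vF e G μ) (μk k) :=
    integrable_of_bounded (vF_continuous he hG hB0 hB μ).aestronglyMeasurable
      (vF_abs_le hG hB0 hB μ)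
  have hbound : Integrable (fun y : ℝ => δ / 8 + 2 * B / S ^ 2 * y ^ 2) (μk k) :=
    (integrable_const _).add ((hmomk k).const_mul _)
  have hsplit : |∫ y, vF e G (μk k) y ∂μk k - ∫ y, vF e G μ y ∂μk k|
      ≤ δ / 8 + 2 * B * M / S ^ 2 := by
    rw [← integral_sub hint_vk hint_v, ← Real.norm_eq_abs]
    calc ‖∫ y, (vF e G (μk k) y - vF e G μ y) ∂μk k‖
        ≤ ∫ y, (δ / 8 + 2 * B / S ^ 2 * y ^ 2) ∂μk k := by
          apply norm_integral_le_of_norm_le hbound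
          apply ae_of_all
          intro y
          rw [Real.norm_eq_abs]
          rcases le_total |y| S with hy | hy
          · have hmem : y ∈ Icc (-S) S := by
              rw [mem_Icc]
              exact abs_le.1 hy
            have h1 := hk1 y hmem
            have h2 : (0:ℝ) ≤ 2 * B / S ^ 2 * y ^ 2 := by positivity
            linarith
          · have h2B : |vF e G (μk k) y - vF e G μ y| ≤ 2 * B := by
              calc |vF e G (μk k) y - vF e G μ y|
                  ≤ |vF e G (μk k) y| + |vF e G μ y| := abs_sub _ _
              _ ≤ 2 * B := by
                  linarith [vF_abs_le (e := e) hG hB0 hB (μk k) y, vF_abs_le (e := e) hG hB0 hB μ y]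
            have hy2 : S ^ 2 ≤ y ^ 2 := by nlinarith [abs_nonneg y, sq_abs y]
            have : 2 * B = 2 * B / S ^ 2 * S ^ 2 := by field_simp
            have h3 : 2 * B / S ^ 2 * S ^ 2 ≤ 2 * B / S ^ 2 * y ^ 2 :=
              mul_le_mul_of_nonneg_left hy2 (by positivity)
            linarith
    _ = δ / 8 + 2 * B / S ^ 2 * ∫ y, y ^ 2 ∂μk k := by
        rw [integral_add (integrable_const _) ((hmomk k).const_mul _), integral_const,
          integral_const_mul]
        simp
    _ ≤ δ / 8 + 2 * B * M / S ^ 2 := by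
        have h4 : 2 * B / S ^ 2 * ∫ y, y ^ 2 ∂μk k ≤ 2 * B / S ^ 2 * M :=
          mul_le_mul_of_nonneg_left (hMk k) (by positivity)
        have heq : 2 * B / S ^ 2 * M = 2 * B * M / S ^ 2 := by ring
        linarith
  calc |∫ y, vF e G (μk k) y ∂μk k - ∫ y, vF e G μ y ∂μ|
      ≤ |∫ y, vF e G (μk k) y ∂μk k - ∫ y, vF e G μ y ∂μk k|
        + |∫ y, vF e G μ y ∂μk k - ∫ y, vF e G μ y ∂μ| := abs_sub_le _ _ _
  _ < δ := by linarith


end SgnAux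

open SgnAux in
/-- Corollary 5.5: convergence of the smoothed interaction terms with varying
test functions of uniformly at most linear growth.
Here `W'_ε(x) = x/(x² + ε²)^{1/2}` is the derivative of `W_ε(x) = (x²+ε²)^{1/2}`. -/
theorem smoothed_sgn_convergence_varying_test_functions
    (ε : ℕ → ℝ) (hε : ∀ k, 0 < ε k) (hε0 : Tendsto ε atTop (𝓝 0))
    (μk : ℕ → Measure ℝ) (μ : Measure ℝ)
    [∀ k, IsProbabilityMeasure (μk k)] [IsProbabilityMeasure μ]
    (hmom : Integrable (fun x => x ^ 2) μ)
    (hmomk : ∀ k, Integrable (fun x => x ^ 2) (μk k))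
    -- narrow convergence μ^k → μ
    (hnarrow : ∀ f : ℝ → ℝ, Continuous f → (∃ M, ∀ x, |f x| ≤ M) →
      Tendsto (fun k => ∫ x, f x ∂μk k) atTop (𝓝 (∫ x, f x ∂μ)))
    -- convergence of second moments
    (hmomconv : Tendsto (fun k => ∫ x, x ^ 2 ∂μk k) atTop (𝓝 (∫ x, x ^ 2 ∂μ)))
    (g : ℕ → ℝ → ℝ) (glim : ℝ → ℝ) (C : ℝ)
    (hgcont : ∀ k, Continuous (g k))
    -- uniform linear growth
    (hgC : ∀ k x, |g k x| ≤ C * (1 + |x|))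
    -- locally uniform convergence g^k → g
    (hgconv : TendstoLocallyUniformly g glim atTop) :
    Tendsto
      (fun k => ∫ y, ∫ x,
        (x - y) / Real.sqrt ((x - y) ^ 2 + (ε k) ^ 2) * g k x ∂μk k ∂μk k)
      atTop
      (𝓝 (∫ y, ∫ x, Real.sign (x - y) * glim x ∂μ ∂μ)) := by
  classical
  have hC0 : 0 ≤ C := le_trans (abs_nonneg (g 0 0)) (by simpa using hgC 0 0)
  have hglimc : Continuous glim := hgconv.continuous (Eventually.of_forall hgcont).frequently
  have hglimC : ∀ x, |glim x| ≤ C * (1 + |x|) := by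
    intro x
    have hpt : Tendsto (fun k => g k x) atTop (𝓝 (glim x)) :=
      (hgconv.tendstoLocallyUniformlyOn).tendsto_at (mem_univ x)
    exact le_of_tendsto hpt.abs (Eventually.of_forall fun k => hgC k x)
  -- uniform moment bound
  obtain ⟨M0, hM0⟩ := hmomconv.bddAbove_range
  set M : ℝ := max 1 (max M0 (∫ x, x ^ 2 ∂μ)) with hMdef
  have hM1 : 1 ≤ M := le_max_left _ _
  have hMk : ∀ k, ∫ x, x ^ 2 ∂μk k ≤ M := fun k =>
    le_trans (hM0 (mem_range_self k)) (le_trans (le_max_left _ _) (le_max_right _ _))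
  have hMμ : ∫ x, x ^ 2 ∂μ ≤ M := le_trans (le_max_right _ _) (le_max_right _ _)
  -- rewrite both sides through Jp
  have hrw : ∀ k, Jp (phi (ε k)) (g k) (μk k)
      = ∫ y, ∫ x, (x - y) / Real.sqrt ((x - y) ^ 2 + (ε k) ^ 2) * g k x ∂μk k ∂μk k := by
    intro k
    have h1 := iter_eq_prod (m := μk k) (fun x y => phi (ε k) (x - y) * g k x)
      (integrable_kernel_mul (hmomk k) (phi_continuous (hε k)).measurable
        (phi_abs_le (ε k)) (hgcont k) (hgC k))
    rw [Jp_def]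
    exact h1.symm
  have hrwA : Jp Real.sign glim μ = ∫ y, ∫ x, Real.sign (x - y) * glim x ∂μ ∂μ := by
    have h1 := iter_eq_prod (m := μ) (fun x y => Real.sign (x - y) * glim x)
      (integrable_kernel_mul hmom sign_measurable sign_abs_le hglimc hglimC)
    rw [Jp_def]
    exact h1.symm
  have hGoalEq : (fun k => ∫ y, ∫ x,
      (x - y) / Real.sqrt ((x - y) ^ 2 + (ε k) ^ 2) * g k x ∂μk k ∂μk k)
      = fun k => Jp (phi (ε k)) (g k) (μk k) := funext (fun k => (hrw k).symm)
  rw [hGoalEq, ← hrwA]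
  rw [Metric.tendsto_nhds]
  intro δ hδ
  set δ' : ℝ := δ / 8 with hδ'def
  have hδ'0 : 0 < δ' := by positivity
  -- truncation radius
  set R : ℝ := max 1 (2 * C * M / δ') with hRdef
  have hR1 : 1 ≤ R := le_max_left _ _
  have hR0 : (0:ℝ) < R := lt_of_lt_of_le one_pos hR1
  have hM0' : (0:ℝ) < M := lt_of_lt_of_le one_pos hM1
  have hRb : 2 * C * M / R ≤ δ' := by
    rcases eq_or_lt_of_le hC0 with h | h
    · rw [← h]
      simpa using hδ'0.le
    · rw [div_le_iff₀ hR0]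
      calc 2 * C * M = δ' * (2 * C * M / δ') := by field_simp
      _ ≤ δ' * R := mul_le_mul_of_nonneg_left (le_max_right _ _) hδ'0.le
  -- truncation errors
  have hT1 : ∀ k, |Jp (phi (ε k)) (g k) (μk k)
      - Jp (phi (ε k)) (fun x => g k x * psi R x) (μk k)| ≤ δ' := by
    intro k
    calc |Jp (phi (ε k)) (g k) (μk k)
        - Jp (phi (ε k)) (fun x => g k x * psi R x) (μk k)|
        ≤ 2 * C / R * ∫ x, x ^ 2 ∂μk k :=
          Jp_trunc_le (hmomk k) (phi_continuous (hε k)).measurable (phi_abs_le (ε k))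
            (hgcont k) hC0 hR1 (hgC k)
    _ ≤ δ' := by
        have h1 : 2 * C / R * ∫ x, x ^ 2 ∂μk k ≤ 2 * C / R * M :=
          mul_le_mul_of_nonneg_left (hMk k) (by positivity)
        have h2 : 2 * C / R * M = 2 * C * M / R := by ring
        linarith
  have hT5 : |Jp Real.sign glim μ - Jp Real.sign (fun x => glim x * psi R x) μ| ≤ δ' := by
    calc |Jp Real.sign glim μ - Jp Real.sign (fun x => glim x * psi R x) μ|
        ≤ 2 * C / R * ∫ x, x ^ 2 ∂μ :=
          Jp_trunc_le hmom sign_measurable sign_abs_le hglimc hC0 hR1 hglimC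
    _ ≤ δ' := by
        have h1 : 2 * C / R * ∫ x, x ^ 2 ∂μ ≤ 2 * C / R * M :=
          mul_le_mul_of_nonneg_left hMμ (by positivity)
        have h2 : 2 * C / R * M = 2 * C * M / R := by ring
        linarith
  -- the truncated test functions
  set B : ℝ := C * (1 + 2 * R) + 1 with hBdef
  have hB1 : 1 ≤ B := by nlinarith
  have hB0 : (0:ℝ) ≤ B := by linarith
  have hcut : ∀ h : ℝ → ℝ, (∀ x, |h x| ≤ C * (1 + |x|)) → ∀ x, |h x * psi R x| ≤ B := by
    intro h hh x
    rcases le_total |x| (2 * R) with hx | hx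
    · rw [abs_mul, abs_of_nonneg (psi_nonneg R x)]
      calc |h x| * psi R x ≤ (C * (1 + |x|)) * 1 :=
            mul_le_mul (hh x) (psi_le_one R x) (psi_nonneg R x) (by positivity)
      _ = C * (1 + |x|) := mul_one _
      _ ≤ C * (1 + 2 * R) := by nlinarith
      _ ≤ B := by rw [hBdef]; linarith
    · rw [psi_eq_zero hR0 hx, mul_zero, abs_zero]; linarith
  have hGb : ∀ x, |glim x * psi R x| ≤ B := hcut glim hglimC
  have hGkb : ∀ k x, |g k x * psi R x| ≤ B := fun k => hcut (g k) (hgC k)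
  have hGcont : Continuous (fun x => glim x * psi R x) := hglimc.mul (psi_continuous R)
  have hGkcont : ∀ k, Continuous (fun x => g k x * psi R x) :=
    fun k => (hgcont k).mul (psi_continuous R)
  -- uniform continuity of the limit truncation
  have hGsupp : HasCompactSupport (fun x => glim x * psi R x) := by
    apply HasCompactSupport.intro (isCompact_Icc (a := -(2 * R)) (b := 2 * R))
    intro x hx
    have h2R : 2 * R ≤ |x| := by
      by_contra hlt
      push_neg at hlt
      exact hx (mem_Icc.2 ⟨by linarith [(abs_lt.1 hlt).1], by linarith [(abs_lt.1 hlt).2]⟩)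
    rw [psi_eq_zero hR0 h2R, mul_zero]
  have hGuc : UniformContinuous (fun x => glim x * psi R x) :=
    hGsupp.uniformContinuous_of_continuous hGcont
  rw [Metric.uniformContinuous_iff] at hGuc
  obtain ⟨η0, hη00, hηmod0⟩ := hGuc (δ' / 4) (by positivity)
  set ηm : ℝ := η0 / 2 with hηmdef
  have hηm0 : 0 < ηm := by positivity
  have hmodG : ∀ x y, |x - y| ≤ ηm → |glim x * psi R x - glim y * psi R y| ≤ δ' / 4 := by
    intro x y hxy
    have hd : dist x y < η0 := by rw [Real.dist_eq]; rw [hηmdef] at hxy; linarith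
    have := hηmod0 hd
    rw [Real.dist_eq] at this
    exact this.le
  -- choose e
  set e : ℝ := min 1 (δ' * ηm / (4 * B)) with hedef
  have he0 : 0 < e := lt_min one_pos (by positivity)
  have heb : e ≤ δ' * ηm / (4 * B) := min_le_right _ _
  have heBη : e * B / ηm ≤ δ' / 4 := by
    rw [div_le_iff₀ hηm0]
    calc e * B ≤ (δ' * ηm / (4 * B)) * B := mul_le_mul_of_nonneg_right heb hB0
    _ = δ' / 4 * ηm := by field_simp
  -- T4 : replacing Kc e by sign under μ
  have hT4 : |Jp (Kc e) (fun x => glim x * psi R x) μ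
      - Jp Real.sign (fun x => glim x * psi R x) μ| ≤ δ' / 4 + e * B / ηm :=
    Jp_diff_le Kc_continuous.measurable (Kc_abs_le e) (Kc_neg e)
      sign_measurable sign_abs_le (fun t => Real.sign_neg)
      he0.le hηm0 (by positivity) hB0
      (fun t ht => Kc_sub_sign_abs_le he0 ht) hGcont hGb hmodG
  have hT4' : |Jp (Kc e) (fun x => glim x * psi R x) μ
      - Jp Real.sign (fun x => glim x * psi R x) μ| ≤ δ' / 2 := by linarith
  -- eventual uniform closeness of g k ψ to glim ψ
  have hU : TendstoUniformlyOn g glim atTop (Icc (-(2 * R)) (2 * R)) :=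
    (tendstoLocallyUniformly_iff_forall_isCompact.1 hgconv) _ isCompact_Icc
  rw [Metric.tendstoUniformlyOn_iff] at hU
  have hEG : ∀ᶠ k in atTop, ∀ x, |g k x * psi R x - glim x * psi R x| ≤ δ' / 8 := by
    filter_upwards [hU (δ' / 8) (by positivity)] with k hk x
    rcases le_total |x| (2 * R) with hx | hx
    · have hmem : x ∈ Icc (-(2 * R)) (2 * R) := mem_Icc.2 (abs_le.1 hx)
      have hd := hk x hmem
      rw [Real.dist_eq] at hd
      have heq : |g k x * psi R x - glim x * psi R x| = |g k x - glim x| * psi R x := by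
        rw [← sub_mul, abs_mul, abs_of_nonneg (psi_nonneg R x)]
      rw [heq]
      calc |g k x - glim x| * psi R x ≤ |g k x - glim x| * 1 :=
            mul_le_mul_of_nonneg_left (psi_le_one R x) (abs_nonneg _)
      _ = |g k x - glim x| := mul_one _
      _ ≤ δ' / 8 := by rw [abs_sub_comm]; exact hd.le
    · rw [psi_eq_zero hR0 hx, mul_zero, mul_zero, sub_zero, abs_zero]
      positivity
  -- eventual smallness of ε k
  have hEε : ∀ᶠ k in atTop, ε k ≤ δ' * ηm / (4 * B) := by
    have hball := hε0.eventually
      (Metric.ball_mem_nhds (0:ℝ) (show 0 < δ' * ηm / (4 * B) by positivity))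
    filter_upwards [hball] with k hk
    rw [Real.dist_eq, sub_zero] at hk
    linarith [le_abs_self (ε k)]
  -- convergence of the fixed-kernel term
  have hT3t := tendsto_Jp_Kc μk μ hmom hmomk hnarrow hM1 hMk he0 hGcont hB1 hGb
  have hE3 := (Metric.tendsto_nhds.mp hT3t) (δ' / 2) (by positivity)
  -- assemble
  filter_upwards [hEG, hEε, hE3] with k hk1 hk2 hk3
  rw [Real.dist_eq]
  rw [Real.dist_eq] at hk3
  -- T2 : replacing phi (ε k) by Kc e under μk k
  have hdiffke : ∀ t, t ≠ 0 → |phi (ε k) t - Kc e t| ≤ (ε k + e) / |t| := by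
    intro t ht
    calc |phi (ε k) t - Kc e t|
        ≤ |phi (ε k) t - Real.sign t| + |Real.sign t - Kc e t| := abs_sub_le _ _ _
    _ ≤ ε k / |t| + e / |t| := add_le_add (phi_sub_sign_abs_le (hε k) ht)
          (by rw [abs_sub_comm]; exact Kc_sub_sign_abs_le he0 ht)
    _ = (ε k + e) / |t| := (add_div _ _ _).symm
  have hmodk : ∀ x y, |x - y| ≤ ηm → |g k x * psi R x - g k y * psi R y| ≤ δ' / 2 := by
    intro x y hxy
    have h1 := abs_sub_le (g k x * psi R x) (glim x * psi R x) (g k y * psi R y)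
    have h2 := abs_sub_le (glim x * psi R x) (glim y * psi R y) (g k y * psi R y)
    have h3 := hk1 x
    have h4 := hmodG x y hxy
    have h5 : |glim y * psi R y - g k y * psi R y| ≤ δ' / 8 := by
      rw [abs_sub_comm]; exact hk1 y
    linarith
  have hT2 : |Jp (phi (ε k)) (fun x => g k x * psi R x) (μk k)
      - Jp (Kc e) (fun x => g k x * psi R x) (μk k)|
      ≤ δ' / 2 + (ε k + e) * B / ηm :=
    Jp_diff_le (phi_continuous (hε k)).measurable (phi_abs_le (ε k)) (phi_neg (ε k))
      Kc_continuous.measurable (Kc_abs_le e) (Kc_neg e)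
      (add_pos (hε k) he0).le hηm0 (by positivity) hB0
      hdiffke (hGkcont k) (hGkb k) hmodk
  have hT2' : |Jp (phi (ε k)) (fun x => g k x * psi R x) (μk k)
      - Jp (Kc e) (fun x => g k x * psi R x) (μk k)| ≤ δ' := by
    have h5 : (ε k + e) * B / ηm ≤ δ' / 2 := by
      rw [div_le_iff₀ hηm0]
      calc (ε k + e) * B ≤ (δ' * ηm / (4 * B) + δ' * ηm / (4 * B)) * B :=
            mul_le_mul_of_nonneg_right (add_le_add hk2 heb) hB0
      _ = δ' / 2 * ηm := by field_simp; ring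
    linarith
  -- T3a : sup-norm replacement of g k ψ by glim ψ
  have hT3a : |Jp (Kc e) (fun x => g k x * psi R x) (μk k)
      - Jp (Kc e) (fun x => glim x * psi R x) (μk k)| ≤ δ' / 8 :=
    Jp_sup_diff Kc_continuous.measurable (Kc_abs_le e) (hGkcont k) hGcont
      (hGkb k) hGb (by positivity) hk1
  -- T5 reversed
  have hT5' : |Jp Real.sign (fun x => glim x * psi R x) μ - Jp Real.sign glim μ| ≤ δ' := by
    rw [abs_sub_comm]; exact hT5
  -- triangle chain
  have t1 := abs_sub_le (Jp (phi (ε k)) (g k) (μk k))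
    (Jp (phi (ε k)) (fun x => g k x * psi R x) (μk k)) (Jp Real.sign glim μ)
  have t2 := abs_sub_le (Jp (phi (ε k)) (fun x => g k x * psi R x) (μk k))
    (Jp (Kc e) (fun x => g k x * psi R x) (μk k)) (Jp Real.sign glim μ)
  have t3 := abs_sub_le (Jp (Kc e) (fun x => g k x * psi R x) (μk k))
    (Jp (Kc e) (fun x => glim x * psi R x) (μk k)) (Jp Real.sign glim μ)
  have t4 := abs_sub_le (Jp (Kc e) (fun x => glim x * psi R x) (μk k))
    (Jp (Kc e) (fun x => glim x * psi R x) μ) (Jp Real.sign glim μ)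
  have t5 := abs_sub_le (Jp (Kc e) (fun x => glim x * psi R x) μ)
    (Jp Real.sign (fun x => glim x * psi R x) μ) (Jp Real.sign glim μ)
  linarith [hT1 k]

end
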